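/- arXiv:1902.10511 — 3 statements merged into one kernel-verified Lean document; each statement's English description precedes it below -/
import Mathlib

section
/- Let Σ be a partition and σ* a nonempty set disjoint from ⋃Σ such that ⋃Σ ⊆ ⋃⋃(Σ ∪ {σ*}) ⊆ P(⋃⋃(Σ ∪ {σ*})) = ⋃(Σ ∪ {σ*}). Then, setting Σ* := Σ ∪ {σ*}: (I) Σ* is a transitive partition, and (II) P(⋃Γ) ⊆ ⋃Σ* for每 every Γ ⊆ Σ, i.e. the domain of Σ* contains the powerset of every union of internal blocks. -/
open ZFSet

/-- A partition: a collection (as a ZFC set) of pairwise disjoint nonempty sets. -/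
def IsPartition (S : ZFSet) : Prop :=
  (∀ σ ∈ S, σ ≠ (∅ : ZFSet)) ∧
    ∀ σ ∈ S, ∀ τ ∈ S, σ ≠ τ → σ ∩ τ = (∅ : ZFSet)

/-- A transitive partition: a partition whose domain `⋃₀ S` is a transitive set. -/
def IsTransPartition (S : ZFSet) : Prop :=
  IsPartition S ∧ (⋃₀ S : ZFSet).IsTransitive

/-!
Adding `σ*` keeps a partition because `σ*` is nonempty and misses every block of `Σ`.
The domain `⋃Σ*` is the powerset of the transitive set `⋃⋃Σ*`, hence transitive; and for
`Γ ⊆ Σ` we have `⋃Γ ⊆ ⋃Σ ⊆ ⋃⋃Σ*`, so `P(⋃Γ) ⊆ P(⋃⋃Σ*) = ⋃Σ*`.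
-/

namespace ZFSet

variable {x y z : ZFSet}

theorem inter_comm (x y : ZFSet) : x ∩ y = y ∩ x := by
  ext; simp only [mem_inter, and_comm]

theorem inter_eq_empty_of_subset_right (h : x ∩ z = ∅) (hyz : y ⊆ z) : x ∩ y = ∅ := by
  rw [eq_empty] at h ⊢
  intro w hw
  rw [mem_inter] at hw
  exact h w (mem_inter.2 ⟨hw.1, hyz hw.2⟩)

theorem sUnion_subset_sUnion (h : x ⊆ y) : ⋃₀ x ⊆ ⋃₀ y := fun _ hw =>
  let ⟨v, hv, hwv⟩ := mem_sUnion.1 hw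
  mem_sUnion.2 ⟨v, h hv, hwv⟩

theorem powerset_subset_powerset (h : x ⊆ y) : powerset x ⊆ powerset y := fun _ hw =>
  mem_powerset.2 ((mem_powerset.1 hw).trans h)

end ZFSet

theorem IsPartition.insert {S σ : ZFSet} (hS : IsPartition S) (hσ : σ ≠ ∅)
    (hdisj : σ ∩ ⋃₀ S = ∅) : IsPartition (insert σ S) := by
  obtain ⟨hS_ne, hS_disj⟩ := hS
  have hσ_disj : ∀ ρ ∈ S, σ ∩ ρ = ∅ := fun ρ hρ =>
    inter_eq_empty_of_subset_right hdisj fun _ hw => mem_sUnion.2 ⟨ρ, hρ, hw⟩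
  refine ⟨fun τ hτ => ?_, fun τ hτ ρ hρ hτρ => ?_⟩
  · rcases mem_insert_iff.1 hτ with rfl | hτS
    exacts [hσ, hS_ne τ hτS]
  · rcases mem_insert_iff.1 hτ with rfl | hτS <;> rcases mem_insert_iff.1 hρ with rfl | hρS
    · exact absurd rfl hτρ
    · exact hσ_disj ρ hρS
    · rw [inter_comm]; exact hσ_disj τ hτS
    · exact hS_disj τ hτS ρ hρS hτρ

/-- if `σ*` is a nonempty set disjoint from `⋃Σ` satisfying
`⋃Σ ⊆ ⋃⋃(Σ ∪ {σ*}) ⊆ P(⋃⋃(Σ ∪ {σ*})) = ⋃(Σ ∪ {σ*})`, then `Σ* := Σ ∪ {σ*}` is a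
transitive partition whose domain contains the powerset of every union of internal
blocks. -/
theorem pow_completion_is_transitive_partition
    (Sg σstar : ZFSet) (hSg : IsPartition Sg)
    (hne : σstar ≠ (∅ : ZFSet))
    (hdisj : σstar ∩ (⋃₀ Sg : ZFSet) = (∅ : ZFSet))
    (h1 : (⋃₀ Sg : ZFSet) ⊆ (⋃₀ (⋃₀ (insert σstar Sg) : ZFSet) : ZFSet))
    (h2 : (⋃₀ (⋃₀ (insert σstar Sg) : ZFSet) : ZFSet) ⊆
            ZFSet.powerset (⋃₀ (⋃₀ (insert σstar Sg) : ZFSet) : ZFSet))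
    (h3 : ZFSet.powerset (⋃₀ (⋃₀ (insert σstar Sg) : ZFSet) : ZFSet) =
            (⋃₀ (insert σstar Sg) : ZFSet)) :
    IsTransPartition (insert σstar Sg) ∧
      ∀ Γ : ZFSet, Γ ⊆ Sg →
        ZFSet.powerset (⋃₀ Γ : ZFSet) ⊆ (⋃₀ (insert σstar Sg) : ZFSet) := by
  have hdomain : (⋃₀ (insert σstar Sg) : ZFSet).IsTransitive :=
    h3 ▸ (isTransitive_iff_subset_powerset.2 h2).powerset
  refine ⟨⟨hSg.insert hne hdisj, hdomain⟩, fun Γ hΓ => ?_⟩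
  exact h3 ▸ powerset_subset_powerset ((sUnion_subset_sUnion hΓ).trans h1)
end

section
/- Let Σ be a transitive partition complying with a P-graph G via the bijection q ↦ q^• from places to blocks. Then (a) rk(q^•) ≤ h(q) for every well-founded place q of G, and (b) rk(⋃B^•) ≤ h(B) for every well-founded node B of G, where rk denotes set-theoretic rank and h the height function on well-founded vertices. -/
/-!
Induct on the height of a place `q`. An element `x` of the block `q^•` lies in the transitive
domain `⋃Σ`, so it is covered by the blocks of the node `B` of places whose blocks meet `x`;
if `x ≠ ∅` this says `x ∈ P*(B^•)`, hence `q ∈ T(B)` by compliance, so `h(B) < h(q)`.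
Every `p ∈ B` has `h(p) ≤ h(B)`, so by induction `rk(x) ≤ rk(⋃B^•) ≤ h(B) < h(q)`.
-/

open ZFSet

/-- `P*(X)`: the set of nonempty subsets of `⋃₀ X` meeting every block of `X`. -/
def powStar (X : ZFSet) : ZFSet :=
  ZFSet.sep (fun y => y ≠ (∅ : ZFSet) ∧ ∀ σ ∈ X, y ∩ σ ≠ (∅ : ZFSet))
    (ZFSet.powerset (⋃₀ X))

variable {P : Type} [Fintype P] [DecidableEq P]

/-- `B^• = {q^• : q ∈ B}` as a ZFC set, for a node `B` of a `P`-graph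
with place interpretation `f = (·)^•`. -/
noncomputable def blockSet (f : P → ZFSet) (B : Finset P) : ZFSet :=
  ZFSet.range (fun q : B => f q)

/-- Edges of the `P`-graph with target function `T`: membership edges
`q → B` for `q ∈ B`, distribution edges `B → q` for `q ∈ T B`. -/
def PGEdge (T : Finset P → Finset P) : P ⊕ Finset P → P ⊕ Finset P → Prop :=
  fun v w =>
    match v, w with
    | .inl q, .inr B => q ∈ B
    | .inr B, .inl q => q ∈ T B
    | _, _ => False

/-- A vertex of a `P`-graph is well-founded iff it is not reachable from any cycle. -/
def PGWF (T : Finset P → Finset P) (v : P ⊕ Finset P) : Prop :=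
  ¬ ∃ c, Relation.TransGen (PGEdge T) c c ∧ Relation.ReflTransGen (PGEdge T) c v

theorem ZFSet.inter_ne_empty_iff_exists {x y : ZFSet} : x ∩ y ≠ ∅ ↔ ∃ z, z ∈ x ∧ z ∈ y := by
  simp [eq_empty, mem_inter]

theorem mem_powStar {X y : ZFSet} :
    y ∈ powStar X ↔ y ⊆ ⋃₀ X ∧ y ≠ ∅ ∧ ∀ σ ∈ X, y ∩ σ ≠ ∅ := by
  rw [powStar, mem_sep, mem_powerset]

section Places

variable {α : Type}

theorem PGWF.of_edge {T : Finset α → Finset α} {v w : α ⊕ Finset α}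
    (hvw : PGEdge T v w) (hw : PGWF T w) : PGWF T v :=
  fun ⟨c, hc, hcv⟩ => hw ⟨c, hc, hcv.tail hvw⟩

theorem PGWF.of_mem_node {T : Finset α → Finset α} {B : Finset α} {p : α}
    (hB : PGWF T (.inr B)) (hp : p ∈ B) : PGWF T (.inl p) :=
  PGWF.of_edge (w := .inr B) hp hB

theorem PGWF.of_mem_target {T : Finset α → Finset α} {B : Finset α} {q : α}
    (hq : PGWF T (.inl q)) (hqB : q ∈ T B) : PGWF T (.inr B) :=
  PGWF.of_edge (w := .inl q) hqB hq

section Blocks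

variable {f : α → ZFSet} {B : Finset α}

theorem mem_blockSet {σ : ZFSet} : σ ∈ blockSet f B ↔ ∃ p ∈ B, f p = σ := by
  simp [blockSet]

theorem mem_sUnion_blockSet {y : ZFSet} : y ∈ ⋃₀ blockSet f B ↔ ∃ p ∈ B, y ∈ f p := by
  simp [mem_blockSet]

theorem rank_sUnion_blockSet_le {o : Ordinal} (H : ∀ p ∈ B, rank (f p) ≤ o) :
    rank (⋃₀ blockSet f B) ≤ o := by
  rw [rank_le_iff]
  intro y hy
  obtain ⟨p, hp, hyp⟩ := mem_sUnion_blockSet.1 hy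
  exact (rank_lt_of_mem hyp).trans_le (H p hp)

end Blocks

open Classical in
noncomputable def meetingPlaces [Fintype α] (f : α → ZFSet) (x : ZFSet) : Finset α :=
  Finset.univ.filter fun p => x ∩ f p ≠ ∅

section Partition

variable [Fintype α] {Sg x : ZFSet} {f : α → ZFSet}

theorem mem_meetingPlaces {p : α} : p ∈ meetingPlaces f x ↔ x ∩ f p ≠ ∅ := by
  simp [meetingPlaces]

theorem subset_sUnion_blockSet_meetingPlaces (htrans : (⋃₀ Sg).IsTransitive)
    (hblocks : ∀ σ ∈ Sg, ∃ q, f q = σ) (hx : x ∈ ⋃₀ Sg) :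
    x ⊆ ⋃₀ blockSet f (meetingPlaces f x) := by
  intro y hy
  obtain ⟨σ, hσ, hyσ⟩ := mem_sUnion.1 (htrans x hx hy)
  obtain ⟨p, rfl⟩ := hblocks σ hσ
  exact mem_sUnion_blockSet.2
    ⟨p, mem_meetingPlaces.2 (inter_ne_empty_iff_exists.2 ⟨y, hy, hyσ⟩), hyσ⟩

theorem mem_powStar_meetingPlaces (hx : x ≠ ∅)
    (hsub : x ⊆ ⋃₀ blockSet f (meetingPlaces f x)) :
    x ∈ powStar (blockSet f (meetingPlaces f x)) := by
  refine mem_powStar.2 ⟨hsub, hx, fun σ hσ => ?_⟩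
  obtain ⟨p, hp, rfl⟩ := mem_blockSet.1 hσ
  exact mem_meetingPlaces.1 hp

end Partition

section Height

variable {T : Finset α → Finset α} {h : α ⊕ Finset α → ℕ}

theorem height_le_of_mem_node
    (hnode : ∀ B : Finset α, B.Nonempty → PGWF T (.inr B) →
      h (.inr B) = B.sup (fun q => h (.inl q)))
    {B : Finset α} {p : α} (hB : PGWF T (.inr B)) (hp : p ∈ B) :
    h (.inl p) ≤ h (.inr B) := by
  rw [hnode B ⟨p, hp⟩ hB]
  exact Finset.le_sup (f := fun q => h (.inl q)) hp

theorem height_pos [Fintype α] [DecidableEq α]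
    (hplace : ∀ q : α, PGWF T (.inl q) →
      h (.inl q) =
        (Finset.univ.filter (fun B : Finset α => q ∈ T B)).sup (fun B => h (.inr B)) + 1)
    {q : α} (hq : PGWF T (.inl q)) : 0 < h (.inl q) := by
  rw [hplace q hq]
  exact Nat.succ_pos _

theorem height_lt_of_mem_target [Fintype α] [DecidableEq α]
    (hplace : ∀ q : α, PGWF T (.inl q) →
      h (.inl q) =
        (Finset.univ.filter (fun B : Finset α => q ∈ T B)).sup (fun B => h (.inr B)) + 1)
    {q : α} {B : Finset α} (hq : PGWF T (.inl q)) (hqB : q ∈ T B) :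
    h (.inr B) < h (.inl q) := by
  rw [hplace q hq, Nat.lt_succ_iff]
  exact Finset.le_sup (f := fun B => h (.inr B)) (by simpa using hqB)

variable {f : α → ZFSet}

theorem rank_sUnion_blockSet_le_height
    (hnode : ∀ B : Finset α, B.Nonempty → PGWF T (.inr B) →
      h (.inr B) = B.sup (fun q => h (.inl q)))
    {B : Finset α} (hB : PGWF T (.inr B))
    (hplaces : ∀ p ∈ B, PGWF T (.inl p) → rank (f p) ≤ h (.inl p)) :
    rank (⋃₀ blockSet f B) ≤ h (.inr B) :=
  rank_sUnion_blockSet_le fun p hp =>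
    (hplaces p hp (hB.of_mem_node hp)).trans
      (Nat.cast_le.2 (height_le_of_mem_node hnode hB hp))

theorem rank_le_height_of_place [Fintype α] [DecidableEq α] {Sg : ZFSet}
    (htrans : (⋃₀ Sg).IsTransitive) (hblocks : ∀ σ : ZFSet, σ ∈ Sg ↔ ∃ q, f q = σ)
    (hcomp : ∀ B q, f q ∩ powStar (blockSet f B) ≠ ∅ → q ∈ T B)
    (hnode : ∀ B : Finset α, B.Nonempty → PGWF T (.inr B) →
      h (.inr B) = B.sup (fun q => h (.inl q)))
    (hplace : ∀ q : α, PGWF T (.inl q) →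
      h (.inl q) =
        (Finset.univ.filter (fun B : Finset α => q ∈ T B)).sup (fun B => h (.inr B)) + 1)
    (q : α) (hq : PGWF T (.inl q)) : rank (f q) ≤ h (.inl q) := by
  induction hn : h (.inl q) using Nat.strong_induction_on generalizing q with
  | _ n ih =>
  subst hn
  rw [rank_le_iff]
  intro x hx
  obtain rfl | hne := eq_or_ne x ∅
  · rw [rank_empty]
    exact_mod_cast height_pos hplace hq
  set B := meetingPlaces f x
  have hcover : x ⊆ ⋃₀ blockSet f B := subset_sUnion_blockSet_meetingPlaces htrans
    (fun σ hσ => (hblocks σ).1 hσ) (mem_sUnion_of_mem hx ((hblocks _).2 ⟨q, rfl⟩))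
  have hqB : q ∈ T B := hcomp B q <| inter_ne_empty_iff_exists.2
    ⟨x, hx, mem_powStar_meetingPlaces hne hcover⟩
  have hBq : h (.inr B) < h (.inl q) := height_lt_of_mem_target hplace hq hqB
  have hB : PGWF T (.inr B) := hq.of_mem_target hqB
  calc rank x ≤ rank (⋃₀ blockSet f B) := rank_mono hcover
    _ ≤ h (.inr B) := rank_sUnion_blockSet_le_height hnode hB fun p hp hpwf =>
        ih _ ((height_le_of_mem_node hnode hB hp).trans_lt hBq) p hpwf rfl
    _ < h (.inl q) := by exact_mod_cast hBq

end Height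

end Places

theorem rank_le_height_of_complies_general
    (Sg : ZFSet) (hSg : IsTransPartition Sg)
    (T : Finset P → Finset P) (f : P → ZFSet)
    -- `q ↦ q^•` is a bijection from the places onto the blocks of `Σ`
    (hblocks : ∀ σ : ZFSet, σ ∈ Sg ↔ ∃ q : P, f q = σ)
    -- compliance: `T B = {q : q^• ∩ P*(B^•) ≠ ∅}`
    (hcomp : ∀ (B : Finset P) (q : P),
      q ∈ T B ↔ f q ∩ powStar (blockSet f B) ≠ (∅ : ZFSet))
    -- `h` is the height function on well-founded vertices
    (h : P ⊕ Finset P → ℕ)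
    (hnode : ∀ B : Finset P, B.Nonempty → PGWF T (.inr B) →
      h (.inr B) = B.sup (fun q => h (.inl q)))
    (hplace : ∀ q : P, PGWF T (.inl q) →
      h (.inl q) =
        (Finset.univ.filter (fun B : Finset P => q ∈ T B)).sup
          (fun B => h (.inr B)) + 1) :
    (∀ q : P, PGWF T (.inl q) → ZFSet.rank (f q) ≤ (h (.inl q) : Ordinal)) ∧
      (∀ B : Finset P, PGWF T (.inr B) →
        ZFSet.rank (⋃₀ blockSet f B : ZFSet) ≤ (h (.inr B) : Ordinal)) := by
  have hplaces := rank_le_height_of_place hSg.2 hblocks (fun B q => (hcomp B q).2) hnode hplace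
  exact ⟨hplaces, fun B hB => rank_sUnion_blockSet_le_height hnode hB fun p _ => hplaces p⟩

/-- if a transitive partition `Σ` complies with a `P`-graph `G` via the
bijection `q ↦ q^•`, then `rk(q^•) ≤ h(q)` for every well-founded place `q`, and
`rk(⋃ B^•) ≤ h(B)` for every well-founded node `B`, where `h` is the height function
of the well-founded part of `G`. -/
theorem rank_le_height_of_complies
    (Sg : ZFSet) (hSg : IsTransPartition Sg)
    (T : Finset P → Finset P) (f : P → ZFSet)
    -- `q ↦ q^•` is a bijection from the places onto the blocks of `Σ`
    (hinj : Function.Injective f)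
    (hblocks : ∀ σ : ZFSet, σ ∈ Sg ↔ ∃ q : P, f q = σ)
    -- compliance: `T B = {q : q^• ∩ P*(B^•) ≠ ∅}`
    (hcomp : ∀ (B : Finset P) (q : P),
      q ∈ T B ↔ f q ∩ powStar (blockSet f B) ≠ (∅ : ZFSet))
    -- `h` is the height function on well-founded vertices
    (h : P ⊕ Finset P → ℕ)
    (h0 : h (.inr (∅ : Finset P)) = 0)
    (hnode : ∀ B : Finset P, B.Nonempty → PGWF T (.inr B) →
      h (.inr B) = B.sup (fun q => h (.inl q)))
    (hplace : ∀ q : P, PGWF T (.inl q) →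
      h (.inl q) =
        (Finset.univ.filter (fun B : Finset P => q ∈ T B)).sup
          (fun B => h (.inr B)) + 1) :
    (∀ q : P, PGWF T (.inl q) → ZFSet.rank (f q) ≤ (h (.inl q) : Ordinal)) ∧
      (∀ B : Finset P, PGWF T (.inr B) →
        ZFSet.rank (⋃₀ blockSet f B : ZFSet) ≤ (h (.inr B) : Ordinal)) :=
  rank_le_height_of_complies_general Sg hSg T f hblocks hcomp h hnode hplace
end

section
/- An MLS⊗ formula Φ is satisfied by some set assignment if and only if it is satisfied by some finite partition. In particular, if M ⊨ Φ for a set assignment M over a collection V ⊇ Vars(Φ) of variables, then the Venn partition Σ_M induced by M satisfies Φ via the map 𝔍_M(v) := {σ ∈ Σ_M : σ ⊆ Mv}, i.e. Σ_M/𝔍_M ⊨ Φ. -/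
open ZFSet

/-- Unordered Cartesian product `S ⊗ T = {{s,t} : s ∈ S, t ∈ T}`. -/
def otimes (S T : ZFSet) : ZFSet :=
  ZFSet.sep (fun y => ∃ s ∈ S, ∃ t ∈ T, y = insert s ({t} : ZFSet))
    (ZFSet.powerset (S ∪ T))

/-- Terms of MLS⊗: set variables, `∅`, and the operators `∪`, `∩`, `\`, `⊗`. -/
inductive MLSTerm : Type
  | var : ℕ → MLSTerm
  | empty : MLSTerm
  | union : MLSTerm → MLSTerm → MLSTerm
  | inter : MLSTerm → MLSTerm → MLSTerm
  | diff : MLSTerm → MLSTerm → MLSTerm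
  | prod : MLSTerm → MLSTerm → MLSTerm

/-- Formulas of MLS⊗: atoms `s ⊆ t`, `s = t`, `s ∈ t` and their propositional
combinations. -/
inductive MLSFormula : Type
  | subset : MLSTerm → MLSTerm → MLSFormula
  | eq : MLSTerm → MLSTerm → MLSFormula
  | mem : MLSTerm → MLSTerm → MLSFormula
  | not : MLSFormula → MLSFormula
  | and : MLSFormula → MLSFormula → MLSFormula
  | or : MLSFormula → MLSFormula → MLSFormula

/-- Value of a term under a set assignment. -/
def MLSTerm.val (M : ℕ → ZFSet) : MLSTerm → ZFSet
  | .var n => M n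
  | .empty => (∅ : ZFSet)
  | .union s t => s.val M ∪ t.val M
  | .inter s t => s.val M ∩ t.val M
  | .diff s t => s.val M \ t.val M
  | .prod s t => otimes (s.val M) (t.val M)

/-- Satisfaction of an MLS⊗ formula by a set assignment (standard set-theoretic
semantics). -/
def MLSFormula.Sat (M : ℕ → ZFSet) : MLSFormula → Prop
  | .subset s t => s.val M ⊆ t.val M
  | .eq s t => s.val M = t.val M
  | .mem s t => s.val M ∈ t.val M
  | .not φ => ¬ φ.Sat M
  | .and φ ψ => φ.Sat M ∧ ψ.Sat M
  | .or φ ψ => φ.Sat M ∨ ψ.Sat M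

/-- The set variables occurring in a term. -/
def MLSTerm.vars : MLSTerm → Finset ℕ
  | .var n => {n}
  | .empty => ∅
  | .union s t => s.vars ∪ t.vars
  | .inter s t => s.vars ∪ t.vars
  | .diff s t => s.vars ∪ t.vars
  | .prod s t => s.vars ∪ t.vars

/-- The set variables occurring in a formula. -/
def MLSFormula.vars : MLSFormula → Finset ℕ
  | .subset s t => s.vars ∪ t.vars
  | .eq s t => s.vars ∪ t.vars
  | .mem s t => s.vars ∪ t.vars
  | .not φ => φ.vars
  | .and φ ψ => φ.vars ∪ ψ.vars
  | .or φ ψ => φ.vars ∪ ψ.vars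

/-- A ZFC set with the elements of a list as members. -/
def zfOfList : List ZFSet → ZFSet
  | [] => (∅ : ZFSet)
  | a :: l => insert a (zfOfList l)

/-- `⋃_{v ∈ V} M v`. -/
noncomputable def unionOver (V : Finset ℕ) (M : ℕ → ZFSet) : ZFSet :=
  ⋃₀ zfOfList (V.toList.map M)

/-- The Venn region (relative to the sets `M v`, `v ∈ V`) of an element `x`. -/
noncomputable def vennRegion (V : Finset ℕ) (M : ℕ → ZFSet) (x : ZFSet) : ZFSet :=
  ZFSet.sep (fun y => ∀ v ∈ V, (y ∈ M v ↔ x ∈ M v)) (unionOver V M)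

/-- The Venn partition `Σ_M` induced by the assignment `M` on the variables of `V`:
the collection of nonempty Venn regions of the sets `{M v : v ∈ V}`. -/
noncomputable def vennPartition (V : Finset ℕ) (M : ℕ → ZFSet) : ZFSet :=
  ZFSet.sep (fun σ => ∃ x : ZFSet, x ∈ unionOver V M ∧ σ = vennRegion V M x)
    (ZFSet.powerset (unionOver V M))

/-!
If `M ⊨ Φ`, then every `M v` with `v ∈ V` is the union of the Venn regions of `Σ_M` it contains,
so `M_𝔍` agrees with `M` on the variables of `Φ` and satisfies `Φ`; conversely a partition model
is a set model.

As `ZFSet` is universe polymorphic, the two sides of the equivalence may live in different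
universes, so models must be moved between universes. Given `M`, close the values of all terms
under the MLS⊗ operations, unordered pairs, components of pairs, and a choice of witnesses
`z ∈ x \ y` for `x ⊈ y`. The result `H` is countable, so the Mostowski collapse of `(H, ∈)` lands
in every universe; it is injective on `H` thanks to the witnesses, commutes with `⊗` thanks to
the pairs, and hence preserves the truth of every MLS⊗ formula.
-/

universe u v

theorem MLSTerm.val_congr {M M' : ℕ → ZFSet} (t : MLSTerm) (h : ∀ v ∈ t.vars, M v = M' v) :
    t.val M = t.val M' := by
  induction t with
  | var n => exact h n (Finset.mem_singleton_self n)
  | empty => rfl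
  | union s t ihs iht | inter s t ihs iht | diff s t ihs iht | prod s t ihs iht =>
    simp only [vars, Finset.mem_union] at h
    simp only [val, ihs fun v hv => h v (.inl hv), iht fun v hv => h v (.inr hv)]

theorem MLSFormula.sat_congr {M M' : ℕ → ZFSet} (φ : MLSFormula) (h : ∀ v ∈ φ.vars, M v = M' v) :
    φ.Sat M ↔ φ.Sat M' := by
  induction φ with
  | subset s t | eq s t | mem s t =>
    simp only [vars, Finset.mem_union] at h
    simp only [Sat, s.val_congr fun v hv => h v (.inl hv), t.val_congr fun v hv => h v (.inr hv)]
  | not φ ih => simp only [Sat, ih h]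
  | and φ ψ ihφ ihψ | or φ ψ ihφ ihψ =>
    simp only [vars, Finset.mem_union] at h
    simp only [Sat, ihφ fun v hv => h v (.inl hv), ihψ fun v hv => h v (.inr hv)]

section Venn

variable {V : Finset ℕ} {M : ℕ → ZFSet.{u}}

theorem mem_zfOfList {x : ZFSet} {l : List ZFSet} : x ∈ zfOfList l ↔ x ∈ l := by
  induction l with
  | nil => simp [zfOfList]
  | cons a l ih => simp [zfOfList, mem_insert_iff, ih]

theorem mem_unionOver {x : ZFSet} : x ∈ unionOver V M ↔ ∃ v ∈ V, x ∈ M v := by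
  simp [unionOver, mem_zfOfList]

theorem mem_vennRegion {x y : ZFSet} :
    y ∈ vennRegion V M x ↔ y ∈ unionOver V M ∧ ∀ v ∈ V, (y ∈ M v ↔ x ∈ M v) :=
  mem_sep

theorem mem_vennRegion_self {x : ZFSet} (hx : x ∈ unionOver V M) : x ∈ vennRegion V M x :=
  mem_vennRegion.2 ⟨hx, fun _ _ => Iff.rfl⟩

theorem vennRegion_eq_of_mem {x y : ZFSet} (hy : y ∈ vennRegion V M x) :
    vennRegion V M y = vennRegion V M x := by
  ext z
  simp only [mem_vennRegion] at hy ⊢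
  exact and_congr_right fun _ => forall₂_congr fun v hv => iff_congr Iff.rfl (hy.2 v hv)

theorem mem_vennPartition {σ : ZFSet} :
    σ ∈ vennPartition V M ↔ ∃ x ∈ unionOver V M, σ = vennRegion V M x := by
  refine mem_sep.trans ⟨And.right, fun h => ⟨?_, h⟩⟩
  obtain ⟨x, -, rfl⟩ := h
  exact mem_powerset.2 fun y hy => (mem_vennRegion.1 hy).1

theorem vennRegion_subset_iff {x : ZFSet} {v : ℕ} (hx : x ∈ unionOver V M) (hv : v ∈ V) :
    vennRegion V M x ⊆ M v ↔ x ∈ M v :=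
  ⟨fun h => h (mem_vennRegion_self hx), fun h _ hy => ((mem_vennRegion.1 hy).2 v hv).2 h⟩

theorem isPartition_vennPartition : IsPartition (vennPartition V M) := by
  refine ⟨fun σ hσ hempty => ?_, fun σ hσ τ hτ hne => ?_⟩
  · obtain ⟨x, hx, rfl⟩ := mem_vennPartition.1 hσ
    exact notMem_empty x (hempty ▸ mem_vennRegion_self hx)
  · obtain ⟨x, -, rfl⟩ := mem_vennPartition.1 hσ
    obtain ⟨y, -, rfl⟩ := mem_vennPartition.1 hτ
    refine (eq_empty _).2 fun z hz => hne ?_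
    obtain ⟨hzx, hzy⟩ := mem_inter.1 hz
    exact (vennRegion_eq_of_mem hzx).symm.trans (vennRegion_eq_of_mem hzy)

theorem finite_vennPartition : (vennPartition V M).toSet.Finite := by
  classical
  refine Set.Finite.of_injOn (f := fun σ => V.filter fun v => σ ⊆ M v) (t := V.powerset)
    (fun _ _ => Finset.mem_powerset.2 (Finset.filter_subset _ _)) (fun σ hσ τ hτ hστ => ?_)
    (Finset.finite_toSet _)
  obtain ⟨x, hx, rfl⟩ := mem_vennPartition.1 hσ
  obtain ⟨y, hy, rfl⟩ := mem_vennPartition.1 hτ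
  refine (vennRegion_eq_of_mem (mem_vennRegion.2 ⟨hy, fun v hv => ?_⟩)).symm
  have := congrArg (v ∈ ·) hστ
  simpa [hv, vennRegion_subset_iff hx hv, vennRegion_subset_iff hy hv] using this.symm

theorem sUnion_sep_subset_vennPartition {v : ℕ} (hv : v ∈ V) :
    ⋃₀ ZFSet.sep (fun σ => σ ⊆ M v) (vennPartition V M) = M v := by
  ext z
  simp only [mem_sUnion, mem_sep]
  refine ⟨fun ⟨_, ⟨_, hσ⟩, hz⟩ => hσ hz, fun hz => ?_⟩
  have hzV : z ∈ unionOver V M := mem_unionOver.2 ⟨v, hv, hz⟩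
  exact ⟨vennRegion V M z,
    ⟨mem_vennPartition.2 ⟨z, hzV, rfl⟩, (vennRegion_subset_iff hzV hv).2 hz⟩,
    mem_vennRegion_self hzV⟩

theorem MLSFormula.sat_sUnion_sep_subset_vennPartition {φ : MLSFormula} (hV : φ.vars ⊆ V)
    (h : φ.Sat M) : φ.Sat fun v => ⋃₀ ZFSet.sep (fun σ => σ ⊆ M v) (vennPartition V M) :=
  (φ.sat_congr fun _ hv => (sUnion_sep_subset_vennPartition (hV hv)).symm).1 h

end Venn

theorem Set.exists_countable_superset_forall_mem_closed {α : Type*} (F : α → α → Set α)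
    (hF : ∀ x y, (F x y).Countable) {B : Set α} (hB : B.Countable) :
    ∃ H, B ⊆ H ∧ H.Countable ∧ ∀ x ∈ H, ∀ y ∈ H, F x y ⊆ H := by
  let stage : ℕ → Set α := fun n => Nat.rec B (fun _ S => S ∪ ⋃ x ∈ S, ⋃ y ∈ S, F x y) n
  have stage_succ n : stage (n + 1) = stage n ∪ ⋃ x ∈ stage n, ⋃ y ∈ stage n, F x y := rfl
  have stage_mono : Monotone stage :=
    monotone_nat_of_le_succ fun n => (stage_succ n).symm ▸ Set.subset_union_left
  refine ⟨⋃ n, stage n, Set.subset_iUnion stage 0, Set.countable_iUnion fun n => ?_, ?_⟩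
  · induction n with
    | zero => exact hB
    | succ n ih =>
      rw [stage_succ]
      exact ih.union (ih.biUnion fun x _ => ih.biUnion fun y _ => hF x y)
  · intro x hx y hy
    obtain ⟨m, hm⟩ := Set.mem_iUnion.1 hx
    obtain ⟨n, hn⟩ := Set.mem_iUnion.1 hy
    have hx' := stage_mono (le_max_left m n) hm
    have hy' := stage_mono (le_max_right m n) hn
    intro z hz
    refine Set.mem_iUnion.2 ⟨max m n + 1, Or.inr ?_⟩
    exact Set.mem_iUnion₂.2 ⟨x, hx', Set.mem_iUnion₂.2 ⟨y, hy', hz⟩⟩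

namespace ZFSet

theorem mem_otimes {S T p : ZFSet} : p ∈ otimes S T ↔ ∃ s ∈ S, ∃ t ∈ T, p = {s, t} := by
  refine mem_sep.trans ⟨And.right, fun h => ⟨?_, h⟩⟩
  obtain ⟨s, hs, t, ht, rfl⟩ := h
  refine mem_powerset.2 fun z hz => ?_
  rcases mem_pair.1 hz with rfl | rfl
  exacts [mem_union.2 (.inl hs), mem_union.2 (.inr ht)]

section Collapse

variable (H : Set ZFSet.{u}) [Small.{v} H]

/-- On `H` this is the Mostowski collapse of `(H, ∈)`. -/
noncomputable def collapse : ZFSet.{u} → ZFSet.{v} :=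
  mem_wf.fix fun x ih => range fun y : ↥(H ∩ {y | y ∈ x}) => ih y y.2.2

theorem mem_collapse {x : ZFSet.{u}} {z : ZFSet.{v}} :
    z ∈ collapse H x ↔ ∃ y ∈ H, y ∈ x ∧ collapse H y = z := by
  rw [collapse, WellFounded.fix_eq, mem_range]
  exact ⟨fun ⟨y, hy⟩ => ⟨y, y.2.1, y.2.2, hy⟩, fun ⟨y, hyH, hyx, hy⟩ => ⟨⟨y, hyH, hyx⟩, hy⟩⟩

variable {H}

theorem collapse_mono {x y : ZFSet.{u}} (h : x ⊆ y) : collapse.{u, v} H x ⊆ collapse H y :=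
  fun _ hz => by
    obtain ⟨w, hwH, hwx, rfl⟩ := (mem_collapse H).1 hz
    exact (mem_collapse H).2 ⟨w, hwH, h hwx, rfl⟩

theorem collapse_empty : collapse.{u, v} H ∅ = ∅ :=
  (eq_empty _).2 fun _ hz => by
    obtain ⟨y, -, hy, -⟩ := (mem_collapse H).1 hz
    exact notMem_empty y hy

theorem collapse_union (x y : ZFSet.{u}) :
    collapse.{u, v} H (x ∪ y) = collapse H x ∪ collapse H y := by
  ext z
  simp only [mem_union, mem_collapse, or_and_right, and_or_left, exists_or]

section Separating

variable (hsep : ∀ x ∈ H, ∀ y ∈ H, ¬x ⊆ y → ∃ z ∈ H, z ∈ x ∧ z ∉ y)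
include hsep

theorem subset_of_collapse_subset {x y : ZFSet.{u}} (hx : x ∈ H) (hy : y ∈ H)
    (hinj : ∀ z ∈ x, ∀ w ∈ y, z ∈ H → w ∈ H → collapse.{u, v} H z = collapse H w → z = w)
    (h : collapse.{u, v} H x ⊆ collapse H y) : x ⊆ y := by
  by_contra hxy
  obtain ⟨z, hzH, hzx, hzy⟩ := hsep x hx y hy hxy
  obtain ⟨w, hwH, hwy, hwz⟩ := (mem_collapse H).1 (h ((mem_collapse H).2 ⟨z, hzH, hzx, rfl⟩))
  exact hzy (hinj z hzx w hwy hzH hwH hwz.symm ▸ hwy)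

theorem collapse_injOn : Set.InjOn (collapse.{u, v} H) H := by
  intro x hx y hy hxy
  induction x using inductionOn generalizing y with
  | h x ih =>
    exact subset_antisymm
      (subset_of_collapse_subset hsep hx hy (fun z hz w _ hzH hwH => ih z hz hzH hwH) hxy.subset)
      (subset_of_collapse_subset hsep hy hx
        (fun z _ w hw hzH hwH h => (ih w hw hwH hzH h.symm).symm) hxy.symm.subset)

theorem collapse_subset_collapse_iff {x y : ZFSet.{u}} (hx : x ∈ H) (hy : y ∈ H) :
    collapse.{u, v} H x ⊆ collapse H y ↔ x ⊆ y :=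
  ⟨subset_of_collapse_subset hsep hx hy fun _ _ _ _ hz hw => collapse_injOn hsep hz hw,
    collapse_mono⟩

theorem collapse_mem_collapse_iff {x y : ZFSet.{u}} (hx : x ∈ H) :
    collapse.{u, v} H x ∈ collapse H y ↔ x ∈ y := by
  refine ⟨fun h => ?_, fun h => (mem_collapse H).2 ⟨x, hx, h, rfl⟩⟩
  obtain ⟨w, hwH, hwy, hw⟩ := (mem_collapse H).1 h
  exact collapse_injOn hsep hwH hx hw ▸ hwy

theorem collapse_inter (x y : ZFSet.{u}) :
    collapse.{u, v} H (x ∩ y) = collapse H x ∩ collapse H y := by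
  refine subset_antisymm (fun z hz => ?_) fun z hz => ?_
  · exact mem_inter.2 ⟨collapse_mono (fun _ h => (mem_inter.1 h).1) hz,
      collapse_mono (fun _ h => (mem_inter.1 h).2) hz⟩
  · obtain ⟨hzx, hzy⟩ := mem_inter.1 hz
    obtain ⟨w, hwH, hwx, rfl⟩ := (mem_collapse H).1 hzx
    have hwy := (collapse_mem_collapse_iff hsep hwH).1 hzy
    exact (mem_collapse H).2 ⟨w, hwH, mem_inter.2 ⟨hwx, hwy⟩, rfl⟩

theorem collapse_sdiff (x y : ZFSet.{u}) :
    collapse.{u, v} H (x \ y) = collapse H x \ collapse H y := by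
  ext z
  simp only [mem_sdiff, mem_collapse]
  constructor
  · rintro ⟨w, hwH, ⟨hwx, hwy⟩, rfl⟩
    refine ⟨⟨w, hwH, hwx, rfl⟩, fun ⟨w', hw'H, hw'y, hw'⟩ => ?_⟩
    exact hwy (collapse_injOn hsep hw'H hwH hw' ▸ hw'y)
  · rintro ⟨⟨w, hwH, hwx, rfl⟩, hwy⟩
    exact ⟨w, hwH, ⟨hwx, fun h => hwy ⟨w, hwH, h, rfl⟩⟩, rfl⟩

end Separating

theorem collapse_pair {x y : ZFSet.{u}} (hx : x ∈ H) (hy : y ∈ H) :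
    collapse.{u, v} H {x, y} = {collapse H x, collapse H y} := by
  ext z
  simp only [mem_collapse, mem_pair]
  constructor
  · rintro ⟨w, -, rfl | rfl, rfl⟩
    exacts [.inl rfl, .inr rfl]
  · rintro (rfl | rfl)
    exacts [⟨x, hx, .inl rfl, rfl⟩, ⟨y, hy, .inr rfl, rfl⟩]

theorem collapse_otimes (hpair : ∀ x ∈ H, ∀ y ∈ H, ({x, y} : ZFSet) ∈ H)
    (hcomp : ∀ x y, ({x, y} : ZFSet) ∈ H → x ∈ H ∧ y ∈ H) (S T : ZFSet.{u}) :
    collapse.{u, v} H (otimes S T) = otimes (collapse H S) (collapse H T) := by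
  ext z
  simp only [mem_collapse, mem_otimes]
  constructor
  · rintro ⟨p, hpH, ⟨s, hsS, t, htT, rfl⟩, rfl⟩
    obtain ⟨hs, ht⟩ := hcomp s t hpH
    exact ⟨_, ⟨s, hs, hsS, rfl⟩, _, ⟨t, ht, htT, rfl⟩, collapse_pair hs ht⟩
  · rintro ⟨_, ⟨s, hs, hsS, rfl⟩, _, ⟨t, ht, htT, rfl⟩, rfl⟩
    exact ⟨{s, t}, hpair s hs t ht, ⟨s, hsS, t, htT, rfl⟩, collapse_pair hs ht⟩

/-- The closure conditions on `H` under which `collapse H` commutes with the MLS⊗ operations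
and reflects `∈`, `=` and `⊆` between members of `H`. -/
structure IsCollapseAdmissible (H : Set ZFSet.{u}) : Prop where
  separating : ∀ x ∈ H, ∀ y ∈ H, ¬x ⊆ y → ∃ z ∈ H, z ∈ x ∧ z ∉ y
  pair_mem : ∀ x ∈ H, ∀ y ∈ H, ({x, y} : ZFSet) ∈ H
  mem_of_pair_mem : ∀ x y, ({x, y} : ZFSet) ∈ H → x ∈ H ∧ y ∈ H

end Collapse

end ZFSet

section Collapse

variable {H : Set ZFSet.{u}} [Small.{v} H] (hH : IsCollapseAdmissible H)
include hH

theorem MLSTerm.val_collapse (M : ℕ → ZFSet.{u}) (t : MLSTerm) :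
    t.val (collapse.{u, v} H ∘ M) = collapse H (t.val M) := by
  induction t with
  | var n => rfl
  | empty => exact collapse_empty.symm
  | union s t ihs iht => simp only [val, ihs, iht, collapse_union]
  | inter s t ihs iht => simp only [val, ihs, iht, collapse_inter hH.separating]
  | diff s t ihs iht => simp only [val, ihs, iht, collapse_sdiff hH.separating]
  | prod s t ihs iht =>
    simp only [val, ihs, iht, collapse_otimes hH.pair_mem hH.mem_of_pair_mem]

theorem MLSFormula.sat_collapse_iff {M : ℕ → ZFSet.{u}} (hM : ∀ t : MLSTerm, t.val M ∈ H)
    (φ : MLSFormula) :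
    φ.Sat (collapse.{u, v} H ∘ M) ↔ φ.Sat M := by
  induction φ with
  | subset s t =>
    simp only [Sat, MLSTerm.val_collapse hH M]
    exact collapse_subset_collapse_iff hH.separating (hM s) (hM t)
  | eq s t =>
    simp only [Sat, MLSTerm.val_collapse hH M]
    exact (collapse_injOn hH.separating).eq_iff (hM s) (hM t)
  | mem s t =>
    simp only [Sat, MLSTerm.val_collapse hH M]
    exact collapse_mem_collapse_iff hH.separating (hM s)
  | not φ ih => simp only [Sat, ih]
  | and φ ψ ihφ ihψ => simp only [Sat, ihφ, ihψ]
  | or φ ψ ihφ ihψ => simp only [Sat, ihφ, ihψ]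

end Collapse

theorem exists_countable_isCollapseAdmissible (M : ℕ → ZFSet.{u}) :
    ∃ H : Set ZFSet.{u}, H.Countable ∧ IsCollapseAdmissible H ∧ ∀ t : MLSTerm, t.val M ∈ H := by
  have : ∀ x y : ZFSet.{u}, ∃ z, ¬x ⊆ y → z ∈ x ∧ z ∉ y := fun x y => by
    by_cases h : x ⊆ y
    · exact ⟨∅, fun h' => (h' h).elim⟩
    · obtain ⟨z, hzx, hzy⟩ := not_forall₂.1 h
      exact ⟨z, fun _ => ⟨hzx, hzy⟩⟩
  choose witness hwitness using this
  let F : ZFSet.{u} → ZFSet.{u} → Set ZFSet.{u} := fun x y =>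
    {x ∪ y, x ∩ y, x \ y, otimes x y, {x, y}, witness x y} ∪ {z | (∃ a b, x = {a, b}) ∧ z ∈ x}
  have hF : ∀ x y, (F x y).Countable := by
    refine fun x y => (Set.toFinite _).countable.union ?_
    by_cases hx : ∃ a b, x = {a, b}
    · obtain ⟨a, b, rfl⟩ := hx
      refine (Set.toFinite {a, b}).countable.mono fun z hz => ?_
      simpa only [Set.mem_insert_iff, Set.mem_singleton_iff, mem_pair] using hz.2
    · simp only [hx, false_and, Set.ofPred_false, Set.countable_empty]
  obtain ⟨H, hBH, hcount, hclosed⟩ :=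
    Set.exists_countable_superset_forall_mem_closed F hF ((Set.countable_range M).insert ∅)
  refine ⟨H, hcount, ⟨fun x hx y hy hxy => ?_, fun x hx y hy => ?_, fun x y hxy => ?_⟩, fun t => ?_⟩
  · exact ⟨witness x y, hclosed x hx y hy (by simp [F]), hwitness x y hxy⟩
  · exact hclosed x hx y hy (by simp [F])
  · have hpair : ∃ a b, ({x, y} : ZFSet) = {a, b} := ⟨x, y, rfl⟩
    exact ⟨hclosed _ hxy _ hxy (.inr ⟨hpair, by simp⟩), hclosed _ hxy _ hxy (.inr ⟨hpair, by simp⟩)⟩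
  · induction t with
    | var n => exact hBH (.inr ⟨n, rfl⟩)
    | empty => exact hBH (.inl rfl)
    | union s t ihs iht | inter s t ihs iht | diff s t ihs iht | prod s t ihs iht =>
      exact hclosed _ ihs _ iht (by simp [F, MLSTerm.val])

theorem MLSFormula.exists_sat_of_sat {φ : MLSFormula} {M : ℕ → ZFSet.{u}} (h : φ.Sat M) :
    ∃ M' : ℕ → ZFSet.{v}, φ.Sat M' := by
  obtain ⟨H, hcount, hH, hM⟩ := exists_countable_isCollapseAdmissible M
  have : Countable H := hcount.to_subtype
  have : Small.{v} H := Countable.toSmall H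
  exact ⟨collapse.{u, v} H ∘ M, (φ.sat_collapse_iff hH hM).2 h⟩

/-- an MLS⊗ formula is satisfied by some set assignment iff it is
satisfied by some finite partition; in particular, a model `M` of `Φ` induces,
through its Venn partition `Σ_M` and the map `𝔍_M(v) = {σ ∈ Σ_M : σ ⊆ M v}`, a
model of `Φ`, i.e. `Σ_M/𝔍_M ⊨ Φ`. -/
theorem satisfiable_iff_satisfied_by_finite_partition (φ : MLSFormula) :
    ((∃ M : ℕ → ZFSet, φ.Sat M) ↔
      ∃ (Sg : ZFSet) (J : ℕ → ZFSet),
        IsPartition Sg ∧ Sg.toSet.Finite ∧ (∀ v : ℕ, J v ⊆ Sg) ∧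
        φ.Sat (fun v => (⋃₀ J v : ZFSet))) ∧
    ∀ (M : ℕ → ZFSet) (V : Finset ℕ), φ.vars ⊆ V → φ.Sat M →
      φ.Sat (fun v =>
        (⋃₀ ZFSet.sep (fun σ => σ ⊆ M v) (vennPartition V M) : ZFSet)) := by
  refine ⟨⟨fun ⟨_, hM⟩ => ?_, fun ⟨_, _, _, _, _, h⟩ => MLSFormula.exists_sat_of_sat h⟩,
    fun _ _ => MLSFormula.sat_sUnion_sep_subset_vennPartition⟩
  obtain ⟨M, hM⟩ := MLSFormula.exists_sat_of_sat hM
  exact ⟨vennPartition φ.vars M, fun v => ZFSet.sep (fun σ => σ ⊆ M v) (vennPartition φ.vars M),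
    isPartition_vennPartition, finite_vennPartition, fun _ _ hσ => (mem_sep.1 hσ).1,
    MLSFormula.sat_sUnion_sep_subset_vennPartition subset_rfl hM⟩
end
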